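/- arXiv:2603.15059 — 3 statements merged into one kernel-verified Lean document; each statement's English description precedes it below -/
import Mathlib

section
/- If g : ℝ^{m×n} → ℝ is differentiable and L-Hölder smooth with exponent ν ∈ (0,1] (i.e. ‖∇g(W₁) − ∇g(W₂)‖_F ≤ L‖W₁ − W₂‖_F^ν for all W₁, W₂), with L > 0 satisfying L < 2L^ν, and both g^⋆ := inf g ∈ ℝ and g^{⋆⋆} := sup g ∈ ℝ are finite, then for every W ∈ ℝ^{m×n}: ‖∇g(W)‖_F² ≤ 2L^{1+ν}(g^{⋆⋆} − g^⋆)/(2L^ν − L) + (1−ν)L/((1+ν)(2L^ν − L)). -/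
/-!
Along the segment from `x` to `x + v`, the Hölder bound on the gradient gives
`g (x + v) ≤ g x + ⟪∇g x, v⟫ + L/(1+ν) ‖v‖^(1+ν)`. Applied to the gradient step `v = -∇g x / L`,
and after Young's inequality `t^(1+ν) ≤ (1+ν)/2 t² + (1-ν)/2`, this bounds
`(2L^ν - L) ‖∇g x‖²` by `2L^(1+ν)` times the decrease of `g` plus a constant; the decrease is at
most `g⋆⋆ - g⋆`.
-/

open scoped InnerProductSpace

theorem rpow_one_add_le_mul_sq_add {x ν : ℝ} (hx : 0 ≤ x) (hν₀ : -1 ≤ ν) (hν₁ : ν ≤ 1) :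
    x ^ (1 + ν) ≤ (1 + ν) / 2 * x ^ 2 + (1 - ν) / 2 := by
  have hsq : x ^ (1 + ν) = (1 + (x ^ 2 - 1)) ^ ((1 + ν) / 2) := by
    rw [add_sub_cancel, ← Real.rpow_natCast, ← Real.rpow_mul hx]
    norm_num [mul_div_cancel₀]
  calc x ^ (1 + ν) ≤ 1 + (1 + ν) / 2 * (x ^ 2 - 1) :=
        hsq ▸ rpow_one_add_le_one_add_mul_self (by nlinarith) (by linarith) (by linarith)
    _ = (1 + ν) / 2 * x ^ 2 + (1 - ν) / 2 := by ring

section HolderGradient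

variable {F : Type*} [NormedAddCommGroup F] [InnerProductSpace ℝ F] [CompleteSpace F]
  {g : F → ℝ} {L ν : ℝ}

def HasHolderGradient (L ν : ℝ) (g : F → ℝ) : Prop :=
  ∀ x y : F, ‖gradient g x - gradient g y‖ ≤ L * ‖x - y‖ ^ ν

theorem hasDerivAt_comp_add_smul (hg : Differentiable ℝ g) (x v : F) (s : ℝ) :
    HasDerivAt (fun t : ℝ => g (x + t • v)) ⟪gradient g (x + s • v), v⟫_ℝ s := by
  have hline : HasDerivAt (fun t : ℝ => x + t • v) v s := by
    simpa using ((hasDerivAt_id s).smul_const v).const_add x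
  exact ((hg _).hasGradientAt.hasFDerivAt.comp_hasDerivAt s hline).congr_deriv (by simp)

namespace HasHolderGradient

theorem inner_gradient_add_smul_sub_le (hholder : HasHolderGradient L ν g) (hν : 0 < ν)
    (x v : F) {s : ℝ} (hs : 0 ≤ s) :
    ⟪gradient g (x + s • v) - gradient g x, v⟫_ℝ ≤ L * s ^ ν * ‖v‖ ^ (1 + ν) :=
  calc ⟪gradient g (x + s • v) - gradient g x, v⟫_ℝ
      ≤ ‖gradient g (x + s • v) - gradient g x‖ * ‖v‖ := real_inner_le_norm _ _
    _ ≤ L * ‖s • v‖ ^ ν * ‖v‖ := by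
        simpa using mul_le_mul_of_nonneg_right (hholder (x + s • v) x) (norm_nonneg v)
    _ = L * s ^ ν * ‖v‖ ^ (1 + ν) := by
        rw [norm_smul, Real.norm_of_nonneg hs, Real.mul_rpow hs (norm_nonneg v),
          Real.rpow_one_add' (norm_nonneg v) (by linarith)]
        ring

theorem le_add_inner_gradient_add_rpow (hholder : HasHolderGradient L ν g) (hν : 0 < ν)
    (hg : Differentiable ℝ g) (x v : F) :
    g (x + v) ≤ g x + ⟪gradient g x, v⟫_ℝ + L / (1 + ν) * ‖v‖ ^ (1 + ν) := by
  have h1ν : 1 + ν ≠ 0 := by linarith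
  set f : ℝ → ℝ := fun s => g (x + s • v) - s * ⟪gradient g x, v⟫_ℝ
  set B : ℝ → ℝ := fun s => g x + L / (1 + ν) * s ^ (1 + ν) * ‖v‖ ^ (1 + ν)
  have hf (s : ℝ) : HasDerivAt f (⟪gradient g (x + s • v), v⟫_ℝ - ⟪gradient g x, v⟫_ℝ) s :=
    (hasDerivAt_comp_add_smul hg x v s).sub (by simpa using (hasDerivAt_id s).mul_const _)
  have hB (s : ℝ) : HasDerivAt B (L * s ^ ν * ‖v‖ ^ (1 + ν)) s := by
    have hpow : HasDerivAt (fun t : ℝ => t ^ (1 + ν)) ((1 + ν) * s ^ ν) s := by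
      simpa using Real.hasDerivAt_rpow_const (x := s) (p := 1 + ν) (Or.inr (by linarith))
    exact ((hpow.const_mul (L / (1 + ν))).mul_const (‖v‖ ^ (1 + ν))).const_add (g x)
      |>.congr_deriv (by field_simp)
  have hfB : f 1 ≤ B 1 := image_le_of_deriv_right_le_deriv_boundary
    (fun s _ => (hf s).continuousAt.continuousWithinAt) (fun s _ => (hf s).hasDerivWithinAt)
    (by simp [f, B, Real.zero_rpow h1ν]) (fun s _ => (hB s).continuousAt.continuousWithinAt)
    (fun s _ => (hB s).hasDerivWithinAt)
    (fun s hs => by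
      rw [← inner_sub_left]; exact hholder.inner_gradient_add_smul_sub_le hν x v hs.1)
    (Set.right_mem_Icc.2 zero_le_one)
  simp only [f, B, one_smul, one_mul, Real.one_rpow] at hfB
  linarith

theorem sq_norm_gradient_mul_le (hholder : HasHolderGradient L ν g) (hL : 0 < L)
    (hν₀ : 0 < ν) (hν₁ : ν ≤ 1) (hg : Differentiable ℝ g) (x : F) :
    ‖gradient g x‖ ^ 2 * (2 * L ^ ν - L) ≤
      2 * L ^ (1 + ν) * (g x - g (x - L⁻¹ • gradient g x)) + (1 - ν) * L / (1 + ν) := by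
  have hLν : 0 < L ^ ν := Real.rpow_pos_of_pos hL ν
  have hdescent := hholder.le_add_inner_gradient_add_rpow hν₀ hg x (-(L⁻¹ • gradient g x))
  have hstep : L / (1 + ν) * ‖-(L⁻¹ • gradient g x)‖ ^ (1 + ν) =
      ‖gradient g x‖ ^ (1 + ν) / ((1 + ν) * L ^ ν) := by
    rw [norm_neg, norm_smul, Real.norm_of_nonneg (inv_nonneg.2 hL.le),
      Real.mul_rpow (inv_nonneg.2 hL.le) (norm_nonneg _), Real.inv_rpow hL.le,
      Real.rpow_one_add' hL.le (by linarith)]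
    field_simp
  rw [← sub_eq_add_neg, inner_neg_right, real_inner_smul_right, real_inner_self_eq_norm_sq,
    hstep] at hdescent
  set G := ‖gradient g x‖
  have hyoung : 2 * (L * L ^ ν) * (G ^ (1 + ν) / ((1 + ν) * L ^ ν)) ≤
      L * G ^ 2 + (1 - ν) * L / (1 + ν) :=
    calc _ = 2 * L / (1 + ν) * G ^ (1 + ν) := by field_simp
      _ ≤ 2 * L / (1 + ν) * ((1 + ν) / 2 * G ^ 2 + (1 - ν) / 2) := by
          gcongr
          exact rpow_one_add_le_mul_sq_add (norm_nonneg _) (by linarith) hν₁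
      _ = _ := by field_simp
  have hcancel : 2 * (L * L ^ ν) * (L⁻¹ * G ^ 2) = 2 * L ^ ν * G ^ 2 := by field_simp
  rw [Real.rpow_one_add' hL.le (by linarith)]
  linear_combination (2 * (L * L ^ ν)) * hdescent + hyoung - hcancel

end HasHolderGradient

end HolderGradient

/-- If `g` is differentiable and `L`-Hölder smooth with exponent `ν ∈ (0,1]`, `L > 0` with
`L < 2L^ν`, and both `g⋆ = inf g` and `g⋆⋆ = sup g` are finite reals, then for every `W`,
`‖∇g(W)‖² ≤ 2L^{1+ν}(g⋆⋆ − g⋆)/(2L^ν − L) + (1−ν)L/((1+ν)(2L^ν − L))`. -/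
theorem gradient_norm_sq_bound_of_holder_smooth {m n : ℕ}
    (g : EuclideanSpace ℝ (Fin m × Fin n) → ℝ)
    (L ν : ℝ) (hL : 0 < L) (hν : ν ∈ Set.Ioc (0 : ℝ) 1)
    (hL2 : L < 2 * L ^ ν)
    (hdiff : Differentiable ℝ g)
    (hholder : ∀ W₁ W₂ : EuclideanSpace ℝ (Fin m × Fin n),
      ‖gradient g W₁ - gradient g W₂‖ ≤ L * ‖W₁ - W₂‖ ^ ν)
    (gStar gStarStar : ℝ)
    (hinf : IsGLB (Set.range g) gStar)
    (hsup : IsLUB (Set.range g) gStarStar) :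
    ∀ W : EuclideanSpace ℝ (Fin m × Fin n),
      ‖gradient g W‖ ^ 2 ≤
        2 * L ^ (1 + ν) * (gStarStar - gStar) / (2 * L ^ ν - L) +
          (1 - ν) * L / ((1 + ν) * (2 * L ^ ν - L)) := by
  intro W
  have hgap : 0 < 2 * L ^ ν - L := sub_pos.2 hL2
  have hdecrease : g W - g (W - L⁻¹ • gradient g W) ≤ gStarStar - gStar :=
    sub_le_sub (hsup.1 ⟨W, rfl⟩) (hinf.1 ⟨_, rfl⟩)
  rw [← div_div, ← add_div, le_div_iff₀ hgap]
  calc ‖gradient g W‖ ^ 2 * (2 * L ^ ν - L)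
      ≤ 2 * L ^ (1 + ν) * (g W - g (W - L⁻¹ • gradient g W)) + (1 - ν) * L / (1 + ν) :=
        HasHolderGradient.sq_norm_gradient_mul_le hholder hL hν.1 hν.2 hdiff W
    _ ≤ 2 * L ^ (1 + ν) * (gStarStar - gStar) + (1 - ν) * L / (1 + ν) := by
        gcongr
end

section
/- Expansion inequality for the 𝔭-th power of the Frobenius norm: for every 𝔭 ∈ (1,2] and all W, W₁ ∈ ℝ^{m×n} with W ≠ 0, it holds that ‖W + W₁‖_F^𝔭 ≤ ‖W‖_F^𝔭 + 2^{2−𝔭} ‖W₁‖_F^𝔭 + (𝔭 / ‖W‖_F^{2−𝔭}) (W • W₁). -/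
/-!
Write `a = ‖x‖`, `b = ‖y‖`, `t = ⟪x, y⟫`, so that `‖x + y‖² = a² + 2t + b²` and `|t| ≤ ab`.
Since `z ↦ z ^ (p / 2)` is concave, `‖x + y‖ ^ p` lies below its tangent at any point `s²`.
If `b ≤ 2a`, the tangent at `a²` suffices, because `(p / 2) a ^ (p - 2) b² ≤ 2 ^ (2 - p) b ^ p`.
If `b ≥ 2a`, the tangent at `(b - a)²`, together with `(b - a) ^ (p - 2) ≤ a ^ (p - 2)` and
`t ≥ -ab`, reduces the claim to `(b - a) ^ p + p a ^ (p - 1) b ≤ a ^ p + 2 ^ (2 - p) b ^ p`.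
This holds at `b = 2a`, and its `b`-derivative is nonnegative by concavity of `s ↦ s ^ (p - 1)`.
-/

open scoped InnerProductSpace
open Real Set

lemma rpow_le_rpow_add_mul_sub {q y z : ℝ} (hq0 : 0 ≤ q) (hq1 : q ≤ 1) (hy : 0 < y) (hz : 0 ≤ z) :
    z ^ q ≤ y ^ q + q * y ^ (q - 1) * (z - y) := by
  have hbern := rpow_one_add_le_one_add_mul_self (s := z / y - 1)
    (by linarith [div_nonneg hz hy.le]) hq0 hq1
  rw [add_sub_cancel, div_rpow hz hy.le, div_le_iff₀ (rpow_pos_of_pos hy q)] at hbern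
  calc z ^ q ≤ (1 + q * (z / y - 1)) * y ^ q := hbern
    _ = y ^ q + q * (y ^ q / y) * (z - y) := by field_simp
    _ = y ^ q + q * y ^ (q - 1) * (z - y) := by rw [rpow_sub_one hy.ne']

lemma rpow_le_rpow_add_mul_sq_sub_sq {p a c : ℝ} (hp0 : 0 ≤ p) (hp2 : p ≤ 2) (ha : 0 < a)
    (hc : 0 ≤ c) : c ^ p ≤ a ^ p + p / 2 * a ^ (p - 2) * (c ^ 2 - a ^ 2) := by
  have htangent := rpow_le_rpow_add_mul_sub (by linarith : 0 ≤ p / 2) (by linarith : p / 2 ≤ 1)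
    (pow_pos ha 2) (sq_nonneg c)
  rwa [← rpow_natCast_mul hc, ← rpow_natCast_mul ha.le, ← rpow_natCast_mul ha.le, Nat.cast_ofNat,
    mul_div_cancel₀ _ two_ne_zero, show 2 * (p / 2 - 1) = p - 2 by ring] at htangent

lemma rpow_add_rpow_le_two_rpow_mul {q x y : ℝ} (hq0 : 0 ≤ q) (hq1 : q ≤ 1) (hx : 0 ≤ x)
    (hy : 0 ≤ y) : x ^ q + y ^ q ≤ 2 ^ (1 - q) * (x + y) ^ q := by
  have hmid := (concaveOn_rpow hq0 hq1).2 (mem_Ici.2 hx) (mem_Ici.2 hy)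
    (by norm_num : (0:ℝ) ≤ 1 / 2) (by norm_num : (0:ℝ) ≤ 1 / 2) (by norm_num)
  simp only [smul_eq_mul] at hmid
  calc x ^ q + y ^ q = 2 * (1 / 2 * x ^ q + 1 / 2 * y ^ q) := by ring
    _ ≤ 2 * ((x + y) / 2) ^ q := by
      rw [add_div, div_eq_inv_mul x, div_eq_inv_mul y, ← one_div]
      gcongr
    _ = 2 ^ (1 - q) * (x + y) ^ q := by
      rw [div_rpow (by positivity) two_pos.le, rpow_sub two_pos, rpow_one]; ring

lemma sub_rpow_add_mul_le {p a b : ℝ} (hp1 : 1 < p) (hp2 : p ≤ 2) (ha : 0 ≤ a) (hab : 2 * a ≤ b) :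
    (b - a) ^ p + p * a ^ (p - 1) * b ≤ a ^ p + 2 ^ (2 - p) * b ^ p := by
  set g : ℝ → ℝ := fun x => a ^ p + 2 ^ (2 - p) * x ^ p - (x - a) ^ p - p * a ^ (p - 1) * x
  have hg' : ∀ x, HasDerivAt g
      (2 ^ (2 - p) * (p * x ^ (p - 1)) - p * (x - a) ^ (p - 1) - p * a ^ (p - 1)) x := fun x => by
    have hpow := (hasDerivAt_id x).rpow_const (p := p) (Or.inr hp1.le)
    have hpow_sub := ((hasDerivAt_id x).sub_const a).rpow_const (p := p) (Or.inr hp1.le)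
    refine ((((hpow.const_mul (2 ^ (2 - p))).const_add (a ^ p)).sub hpow_sub).sub
      ((hasDerivAt_id x).const_mul (p * a ^ (p - 1)))).congr_deriv ?_
    simp only [id, one_mul, mul_one]
  have hmono : MonotoneOn g (Ici (2 * a)) := by
    refine monotoneOn_of_hasDerivWithinAt_nonneg (convex_Ici _)
      (fun x _ => (hg' x).continuousAt.continuousWithinAt) (fun x _ => (hg' x).hasDerivWithinAt) ?_
    intro x hx
    rw [interior_Ici, mem_Ioi] at hx
    have hmean := rpow_add_rpow_le_two_rpow_mul (by linarith : 0 ≤ p - 1) (by linarith : p - 1 ≤ 1)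
      (by linarith : 0 ≤ x - a) ha
    rw [sub_add_cancel, show 1 - (p - 1) = 2 - p by ring] at hmean
    nlinarith
  have hg2a : g (2 * a) = (4 - 2 * p) * a ^ p := by
    have hap : a ^ (p - 1) * a = a ^ p := by
      rw [← rpow_add_one' ha (by linarith), sub_add_cancel]
    simp only [g, mul_rpow two_pos.le ha, ← mul_assoc, ← rpow_add two_pos,
      show 2 * a - a = a by ring]
    norm_num
    linear_combination (-2 * p) * hap
  have hgb : 0 ≤ g b := by
    have := hmono self_mem_Ici hab hab
    nlinarith [rpow_nonneg ha p]
  simp only [g] at hgb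
  linarith

lemma rpow_sub_two_mul_sq_le {p a b : ℝ} (hp2 : p ≤ 2) (ha : 0 < a) (hb : 0 ≤ b)
    (hba : b ≤ 2 * a) : a ^ (p - 2) * b ^ 2 ≤ 2 ^ (2 - p) * b ^ p := by
  have hsplit : b ^ 2 = b ^ (2 - p) * b ^ p := by
    rw [← rpow_add' hb (by norm_num), sub_add_cancel, rpow_two]
  have hratio : a ^ (p - 2) * b ^ (2 - p) = (b / a) ^ (2 - p) := by
    rw [div_rpow hb ha.le, ← neg_sub, rpow_neg ha.le, inv_mul_eq_div]
  have hle : (b / a) ^ (2 - p) ≤ 2 ^ (2 - p) :=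
    rpow_le_rpow (div_nonneg hb ha.le) ((div_le_iff₀ ha).2 hba) (by linarith)
  rw [hsplit, ← mul_assoc, hratio]
  exact mul_le_mul_of_nonneg_right hle (rpow_nonneg hb p)

lemma rpow_le_of_le_two_mul {p a b c t : ℝ} (hp0 : 0 ≤ p) (hp2 : p ≤ 2) (ha : 0 < a)
    (hb : 0 ≤ b) (hba : b ≤ 2 * a) (hc : 0 ≤ c) (hct : c ^ 2 = a ^ 2 + 2 * t + b ^ 2) :
    c ^ p ≤ a ^ p + 2 ^ (2 - p) * b ^ p + p * a ^ (p - 2) * t := by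
  have htangent := rpow_le_rpow_add_mul_sq_sub_sq hp0 hp2 ha hc
  have hquad := rpow_sub_two_mul_sq_le hp2 ha hb hba
  rw [hct] at htangent
  nlinarith [mul_nonneg (rpow_pos_of_pos ha (p - 2)).le (sq_nonneg b)]

lemma rpow_le_of_two_mul_le {p a b c t : ℝ} (hp1 : 1 < p) (hp2 : p ≤ 2) (ha : 0 < a)
    (hab : 2 * a ≤ b) (hc : 0 ≤ c) (hct : c ^ 2 = a ^ 2 + 2 * t + b ^ 2) (ht : -(a * b) ≤ t) :
    c ^ p ≤ a ^ p + 2 ^ (2 - p) * b ^ p + p * a ^ (p - 2) * t := by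
  have hba : 0 < b - a := by linarith
  have htangent := rpow_le_rpow_add_mul_sq_sub_sq (by linarith) hp2 hba hc
  rw [hct, show a ^ 2 + 2 * t + b ^ 2 - (b - a) ^ 2 = 2 * (t + a * b) by ring] at htangent
  have hmono : (b - a) ^ (p - 2) ≤ a ^ (p - 2) :=
    rpow_le_rpow_of_nonpos ha (by linarith) (by linarith)
  have hap : a ^ (p - 1) = a ^ (p - 2) * a := by
    rw [← rpow_add_one ha.ne']; ring_nf
  have hcore := sub_rpow_add_mul_le hp1 hp2 ha.le hab
  calc c ^ p ≤ (b - a) ^ p + p * (b - a) ^ (p - 2) * (t + a * b) := by linarith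
    _ ≤ (b - a) ^ p + p * a ^ (p - 2) * (t + a * b) := by gcongr; linarith
    _ = (b - a) ^ p + p * a ^ (p - 1) * b + p * a ^ (p - 2) * t := by rw [hap]; ring
    _ ≤ a ^ p + 2 ^ (2 - p) * b ^ p + p * a ^ (p - 2) * t := by linarith

theorem norm_add_rpow_le {E : Type*} [NormedAddCommGroup E] [InnerProductSpace ℝ E] {p : ℝ}
    (hp1 : 1 < p) (hp2 : p ≤ 2) {x : E} (hx : x ≠ 0) (y : E) :
    ‖x + y‖ ^ p ≤ ‖x‖ ^ p + 2 ^ (2 - p) * ‖y‖ ^ p + p * ‖x‖ ^ (p - 2) * ⟪x, y⟫_ℝ := by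
  have hx' := norm_pos_iff.2 hx
  rcases le_total ‖y‖ (2 * ‖x‖) with h | h
  · exact rpow_le_of_le_two_mul (by linarith) hp2 hx' (norm_nonneg y) h (norm_nonneg _)
      (norm_add_sq_real x y)
  · exact rpow_le_of_two_mul_le hp1 hp2 hx' h (norm_nonneg _) (norm_add_sq_real x y)
      (neg_le_of_abs_le (abs_real_inner_le_norm x y))

/-- **Expansion inequality for the `𝔭`-th power of the Frobenius norm.** For `𝔭 ∈ (1,2]` and
`W ≠ 0`: `‖W + W₁‖^𝔭 ≤ ‖W‖^𝔭 + 2^{2−𝔭}‖W₁‖^𝔭 + (𝔭/‖W‖^{2−𝔭})⟪W, W₁⟫`. -/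
theorem pow_p_norm_expansion_inequality {m n : ℕ}
    (𝔭 : ℝ) (h𝔭 : 𝔭 ∈ Set.Ioc (1 : ℝ) 2) :
    ∀ W W₁ : EuclideanSpace ℝ (Fin m × Fin n), W ≠ 0 →
      ‖W + W₁‖ ^ 𝔭 ≤ ‖W‖ ^ 𝔭 + 2 ^ (2 - 𝔭) * ‖W₁‖ ^ 𝔭 +
        (𝔭 / ‖W‖ ^ (2 - 𝔭)) * ⟪W, W₁⟫_ℝ := by
  intro W W₁ hW
  rw [div_eq_mul_inv, ← rpow_neg (norm_nonneg W), neg_sub]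
  exact norm_add_rpow_le h𝔭.1 h𝔭.2 hW W₁
end

section
/- Lower convergence bound for Muon without momentum: let (W_t) be generated by Muon with β = 0 under Assumptions (A1) and (A2). Suppose there exists t₂ ∈ ℕ such that for all t ≥ t₂ the convexity inequality f(W_{t+1}) ≥ f(W_t) + ∇f(W_t) • (W_{t+1} − W_t) holds almost surely (Assumption (A3)), and that C₄ := (1/√n) inf{E[f(W_{t₂})] − E[f(W_t)] : t ≥ t₂} ≥ 0 (Assumption (A4)). Then for all T ∈ ℕ: (1/Σ_{t=t₂}^{T+t₂−1} η_t) Σ_{t=t₂}^{T+t₂−1} η_t E[‖∇f(W_t)‖_F] ≥ C₄ / Σ_{t=t₂}^{T+t₂−1} η_t. -/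
/-!
The first-order convexity inequality (A3) bounds the decrease `f(W_t) − f(W_{t+1})` by
`η_t ∇f(W_t) • O_t`, and Cauchy–Schwarz with `‖O_t‖_F = √n` bounds that by `√n η_t ‖∇f(W_t)‖_F`.
Taking expectations and telescoping from `t₂` to `T + t₂` gives
`√n C₄ ≤ E[f(W_{t₂})] − E[f(W_{T+t₂})] ≤ √n Σ_t η_t E[‖∇f(W_t)‖_F]`.
-/

open MeasureTheory ProbabilityTheory Real Filter Matrix
open scoped InnerProductSpace BigOperators

/-- The `m × n` matrix corresponding to an element of `EuclideanSpace ℝ (Fin m × Fin n)`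
(so that the Euclidean norm is the Frobenius norm). -/
noncomputable def toMat {m n : ℕ} (W : EuclideanSpace ℝ (Fin m × Fin n)) :
    Matrix (Fin m) (Fin n) ℝ := Matrix.of fun i j => W (i, j)

/-- Membership in the Stiefel manifold `St(n,m) = {O ∈ ℝ^{m×n} : Oᵀ O = I_n}`. -/
def IsStiefel {m n : ℕ} (A : EuclideanSpace ℝ (Fin m × Fin n)) : Prop :=
  (toMat A)ᵀ * toMat A = 1

theorem IsStiefel.norm_eq {m n : ℕ} {A : EuclideanSpace ℝ (Fin m × Fin n)} (h : IsStiefel A) :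
    ‖A‖ = √n := by
  have hcol : ∀ j : Fin n, ∑ i : Fin m, A (i, j) * A (i, j) = 1 := fun j => by
    simpa [Matrix.mul_apply, toMat, Matrix.one_apply] using congrFun (congrFun h j) j
  rw [EuclideanSpace.norm_eq]
  congr 1
  calc ∑ p : Fin m × Fin n, ‖A p‖ ^ 2
      = ∑ i : Fin m, ∑ j : Fin n, A (i, j) * A (i, j) := by
        simp [Fintype.sum_prod_type, sq, Real.norm_eq_abs, abs_mul_abs_self]
    _ = n := by rw [Finset.sum_comm]; simp [hcol]

theorem sub_le_norm_mul_norm_of_le_add_inner {E : Type*} [NormedAddCommGroup E]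
    [InnerProductSpace ℝ E] {a b : ℝ} {v d : E} (h : a + ⟪v, d⟫_ℝ ≤ b) :
    a - b ≤ ‖v‖ * ‖d‖ := by
  linarith [neg_le_of_abs_le (abs_real_inner_le_norm v d)]

theorem sub_le_sum_Ico_of_forall_sub_succ_le {F c : ℕ → ℝ} {a b : ℕ} (hab : a ≤ b)
    (h : ∀ t ∈ Finset.Ico a b, F t - F (t + 1) ≤ c t) :
    F a - F b ≤ ∑ t ∈ Finset.Ico a b, c t :=
  calc F a - F b = ∑ t ∈ Finset.Ico a b, (F t - F (t + 1)) := by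
        rw [← neg_sub, ← Finset.sum_Ico_sub F hab, ← Finset.sum_neg_distrib]
        simp only [neg_sub]
    _ ≤ ∑ t ∈ Finset.Ico a b, c t := Finset.sum_le_sum h

theorem le_of_le_inv_mul_of_le_mul {C X c D : ℝ} (hc : 0 ≤ c) (hD : 0 ≤ D)
    (hC : C ≤ c⁻¹ * X) (hX : X ≤ c * D) : C ≤ D := by
  rcases hc.eq_or_lt with rfl | hc
  · simp only [_root_.inv_zero, zero_mul] at hC
    exact hC.trans hD
  · calc C ≤ c⁻¹ * X := hC
      _ ≤ c⁻¹ * (c * D) := by gcongr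
      _ = D := inv_mul_cancel_left₀ hc.ne' D

theorem integral_sub_integral_le_of_stiefel_step {m n : ℕ} {Ω : Type*} {mΩ : MeasurableSpace Ω}
    {μ : Measure Ω} {f : EuclideanSpace ℝ (Fin m × Fin n) → ℝ} {η : ℝ}
    {W W' O : Ω → EuclideanSpace ℝ (Fin m × Fin n)} (hη : 0 ≤ η) (hO : ∀ ω, IsStiefel (O ω))
    (hstep : ∀ ω, W' ω = W ω - η • O ω)
    (hconv : ∀ᵐ ω ∂μ, f (W ω) + ⟪gradient f (W ω), W' ω - W ω⟫_ℝ ≤ f (W' ω))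
    (hfW : Integrable (fun ω => f (W ω)) μ) (hfW' : Integrable (fun ω => f (W' ω)) μ)
    (hgrad : Integrable (fun ω => ‖gradient f (W ω)‖) μ) :
    (∫ ω, f (W ω) ∂μ) - ∫ ω, f (W' ω) ∂μ ≤ √n * (η * ∫ ω, ‖gradient f (W ω)‖ ∂μ) := by
  have hpointwise : ∀ᵐ ω ∂μ, f (W ω) - f (W' ω) ≤ √n * (η * ‖gradient f (W ω)‖) := by
    filter_upwards [hconv] with ω hω
    have hlen : ‖W' ω - W ω‖ = η * √n := by
      rw [hstep, sub_sub_cancel_left, norm_neg, norm_smul, (hO ω).norm_eq,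
        Real.norm_of_nonneg hη]
    have := sub_le_norm_mul_norm_of_le_add_inner hω
    rw [hlen] at this
    linarith
  rw [← integral_sub hfW hfW', ← integral_const_mul, ← integral_const_mul]
  exact integral_mono_ae (hfW.sub hfW') ((hgrad.const_mul η).const_mul √n) hpointwise

theorem muon_no_momentum_lower_convergence_bound_general
    {m n : ℕ}
    {Ω : Type*} {mΩ : MeasurableSpace Ω} (μ : Measure Ω)
    -- empirical risk
    (f : EuclideanSpace ℝ (Fin m × Fin n) → ℝ)
    -- Muon without momentum (β = 0)
    (η : ℕ → ℝ) (hη : ∀ t, 0 < η t)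
    (W g O : ℕ → Ω → EuclideanSpace ℝ (Fin m × Fin n))
    -- O t is a minimizer of ‖O − G_t‖_F over the Stiefel manifold
    (hOmin : ∀ t ω, IsStiefel (O t ω) ∧
      ∀ A : EuclideanSpace ℝ (Fin m × Fin n), IsStiefel A → ‖O t ω - g t ω‖ ≤ ‖A - g t ω‖)
    (hupdate : ∀ t ω, W (t + 1) ω = W t ω - η t • O t ω)
    (hfint : ∀ t, Integrable (fun ω => f (W t ω)) μ)
    (hgradnint : ∀ t, Integrable (fun ω => ‖gradient f (W t ω)‖) μ)
    -- (A3): convexity along the iterates after time t₂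
    (t₂ : ℕ)
    (hA3 : ∀ t, t₂ ≤ t → ∀ᵐ ω ∂μ,
      f (W t ω) + ⟪gradient f (W t ω), W (t + 1) ω - W t ω⟫_ℝ ≤ f (W (t + 1) ω))
    -- (A4): C₄ ≥ 0 is a lower bound of (1/√n)(E[f(W_{t₂})] − E[f(W_t)]) for t ≥ t₂
    (C₄ : ℝ)
    (hC₄ : ∀ t, t₂ ≤ t →
      C₄ ≤ (Real.sqrt n)⁻¹ * ((∫ ω, f (W t₂ ω) ∂μ) - ∫ ω, f (W t ω) ∂μ)) :
    ∀ T : ℕ,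
      C₄ / (∑ t ∈ Finset.Ico t₂ (T + t₂), η t) ≤
        (∑ t ∈ Finset.Ico t₂ (T + t₂), η t)⁻¹ *
          ∑ t ∈ Finset.Ico t₂ (T + t₂), η t * (∫ ω, ‖gradient f (W t ω)‖ ∂μ) := by
  intro T
  set D := ∑ t ∈ Finset.Ico t₂ (T + t₂), η t * ∫ ω, ‖gradient f (W t ω)‖ ∂μ
  have hdecrease : (∫ ω, f (W t₂ ω) ∂μ) - ∫ ω, f (W (T + t₂) ω) ∂μ ≤ √n * D := by
    rw [Finset.mul_sum]
    refine sub_le_sum_Ico_of_forall_sub_succ_le (F := fun t => ∫ ω, f (W t ω) ∂μ)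
      (Nat.le_add_left t₂ T) fun t ht => ?_
    exact integral_sub_integral_le_of_stiefel_step (hη t).le (fun ω => (hOmin t ω).1)
      (hupdate t) (hA3 t (Finset.mem_Ico.1 ht).1) (hfint t) (hfint (t + 1)) (hgradnint t)
  have hD : 0 ≤ D := Finset.sum_nonneg fun t _ =>
    mul_nonneg (hη t).le (integral_nonneg fun _ => norm_nonneg _)
  have hC₄D : C₄ ≤ D :=
    le_of_le_inv_mul_of_le_mul (Real.sqrt_nonneg _) hD (hC₄ (T + t₂) (by omega)) hdecrease
  rw [div_eq_inv_mul]
  exact mul_le_mul_of_nonneg_left hC₄D (inv_nonneg.2 (Finset.sum_nonneg fun t _ => (hη t).le))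

/-- **Lower convergence bound for Muon without momentum** (Theorem 4.3). Under the local
convexity assumption (A3) along the iterates from time `t₂` on, and (A4) `C₄ ≥ 0` being a lower
bound of `(1/√n)(E[f(W_{t₂})] − E[f(W_t)])` for `t ≥ t₂`, the weighted Cesàro mean of
`E[‖∇f(W_t)‖_F]` is at least `C₄ / Σ_{t=t₂}^{T+t₂−1} η_t`. -/
theorem muon_no_momentum_lower_convergence_bound
    {m n N : ℕ} (hN : 0 < N) (hnm : n ≤ m)
    {Ω : Type*} {mΩ : MeasurableSpace Ω} (μ : Measure Ω) [IsProbabilityMeasure μ]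
    (ℱ : Filtration ℕ mΩ)
    (fi : Fin N → EuclideanSpace ℝ (Fin m × Fin n) → ℝ)
    (Li : Fin N → ℝ) (ν 𝔭 σ : ℝ)
    (hLi : ∀ i, 0 < Li i)
    (hν : ν ∈ Set.Ioc (0 : ℝ) 1) (h𝔭 : 𝔭 ∈ Set.Ioc (1 : ℝ) 2) (hσ : 0 ≤ σ)
    -- (A1): Hölder smoothness and finite infima
    (hdiff : ∀ i, Differentiable ℝ (fi i))
    (hholder : ∀ i, ∀ W₁ W₂ : EuclideanSpace ℝ (Fin m × Fin n),
      ‖gradient (fi i) W₁ - gradient (fi i) W₂‖ ≤ Li i * ‖W₁ - W₂‖ ^ ν)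
    (hbdd : ∀ i, BddBelow (Set.range (fi i)))
    -- empirical risk
    (f : EuclideanSpace ℝ (Fin m × Fin n) → ℝ)
    (hf : ∀ W, f W = (N : ℝ)⁻¹ * ∑ i, fi i W)
    -- Muon without momentum (β = 0)
    (η : ℕ → ℝ) (hη : ∀ t, 0 < η t)
    (b : ℕ → ℕ) (hb : ∀ t, 0 < b t)
    (W g O : ℕ → Ω → EuclideanSpace ℝ (Fin m × Fin n))
    -- O t is a minimizer of ‖O − G_t‖_F over the Stiefel manifold
    (hOmin : ∀ t ω, IsStiefel (O t ω) ∧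
      ∀ A : EuclideanSpace ℝ (Fin m × Fin n), IsStiefel A → ‖O t ω - g t ω‖ ≤ ‖A - g t ω‖)
    (hupdate : ∀ t ω, W (t + 1) ω = W t ω - η t • O t ω)
    (hWmeas : ∀ t, StronglyMeasurable[ℱ t] (W t))
    (hgmeas : ∀ t, StronglyMeasurable[ℱ (t + 1)] (g t))
    (hOmeas : ∀ t, StronglyMeasurable[ℱ (t + 1)] (O t))
    (hgint : ∀ t, Integrable (g t) μ)
    -- (A2)(i): conditional unbiasedness of the mini-batch gradient
    (hunbiased : ∀ t, μ[g t | ℱ t] =ᵐ[μ] fun ω => gradient f (W t ω))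
    -- (A2)(ii): conditional 𝔭-variance bound of the mini-batch gradient (Proposition 1)
    (hpvar : ∀ t, ∀ᵐ ω ∂μ,
      (μ[fun ω' => ‖g t ω' - gradient f (W t ω')‖ ^ 𝔭 | ℱ t]) ω ≤
        2 ^ (2 - 𝔭) * σ ^ 𝔭 / (b t : ℝ) ^ (𝔭 - 1))
    (hinnerint : ∀ t, Integrable (fun ω => ⟪gradient f (W t ω), O t ω⟫_ℝ) μ)
    (hfint : ∀ t, Integrable (fun ω => f (W t ω)) μ)
    (hgradnint : ∀ t, Integrable (fun ω => ‖gradient f (W t ω)‖) μ)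
    -- (A3): convexity along the iterates after time t₂
    (t₂ : ℕ)
    (hA3 : ∀ t, t₂ ≤ t → ∀ᵐ ω ∂μ,
      f (W t ω) + ⟪gradient f (W t ω), W (t + 1) ω - W t ω⟫_ℝ ≤ f (W (t + 1) ω))
    -- (A4): C₄ ≥ 0 is a lower bound of (1/√n)(E[f(W_{t₂})] − E[f(W_t)]) for t ≥ t₂
    (C₄ : ℝ) (hC₄pos : 0 ≤ C₄)
    (hC₄ : ∀ t, t₂ ≤ t →
      C₄ ≤ (Real.sqrt n)⁻¹ * ((∫ ω, f (W t₂ ω) ∂μ) - ∫ ω, f (W t ω) ∂μ)) :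
    ∀ T : ℕ,
      C₄ / (∑ t ∈ Finset.Ico t₂ (T + t₂), η t) ≤
        (∑ t ∈ Finset.Ico t₂ (T + t₂), η t)⁻¹ *
          ∑ t ∈ Finset.Ico t₂ (T + t₂), η t * (∫ ω, ‖gradient f (W t ω)‖ ∂μ) :=
  muon_no_momentum_lower_convergence_bound_general (mΩ := mΩ) μ f η hη W g O hOmin hupdate hfint
    hgradnint t₂ hA3 C₄ hC₄
end
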